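/- arXiv:2102.07181 — 3 statements merged into one kernel-verified Lean document; each statement's English description precedes it below -/
import Mathlib

section
/- Let λ > 0, x ∈ ℝ^M, y ∈ ℝ, P := (XᵀX + λI)⁻¹, θ_N := P XᵀY, and let θ₊ := (XᵀX + x xᵀ + λI)⁻¹(XᵀY + x y) be the ridge solution on the training set augmented by (x, y). Then the test residual satisfies y − x⊤θ₊ = (y − x⊤θ_N) / (1 + x⊤P x). -/
/-!
Write `B = A + u vᵀ` and `θ₊ = B⁻¹ (b + y u)`. Then `A θ₊ = b + r u` with `r = y − vᵀθ₊` the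
residual, so `θ₊ = A⁻¹b + r A⁻¹u`; taking the inner product with `v` gives
`r (1 + vᵀA⁻¹u) = y − vᵀA⁻¹b`. The factor `1 + vᵀA⁻¹u` is nonzero by the matrix determinant lemma
`det B = det A · (1 + vᵀA⁻¹u)`. Ridge regression is the case `A = XᵀX + λI`, `u = v = x`, where
both `A` and `B` are positive definite.
-/

open Matrix

namespace Matrix

variable {n K : Type*} [Fintype n] [DecidableEq n] [Field K] {A : Matrix n n K}

theorem det_add_vecMulVec (hA : IsUnit A.det) (u v : n → K) :
    (A + vecMulVec u v).det = A.det * (1 + v ⬝ᵥ A⁻¹ *ᵥ u) := by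
  rw [vecMulVec_eq Unit, det_add_replicateCol_mul_replicateRow hA, ← replicateRow_vecMul,
    det_unique (1 + _ : Matrix Unit Unit K), add_apply, one_apply_eq,
    replicateRow_mul_replicateCol_apply, dotProduct_mulVec]

theorem one_add_dotProduct_inv_mulVec_ne_zero (hA : IsUnit A.det) {u v : n → K}
    (hB : IsUnit (A + vecMulVec u v).det) : 1 + v ⬝ᵥ A⁻¹ *ᵥ u ≠ 0 := by
  rw [det_add_vecMulVec hA] at hB
  exact right_ne_zero_of_mul hB.ne_zero

theorem sub_dotProduct_inv_add_vecMulVec_mulVec (hA : IsUnit A.det) {u v : n → K}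
    (hB : IsUnit (A + vecMulVec u v).det) (b : n → K) (y : K) :
    y - v ⬝ᵥ (A + vecMulVec u v)⁻¹ *ᵥ (b + y • u) =
      (y - v ⬝ᵥ A⁻¹ *ᵥ b) / (1 + v ⬝ᵥ A⁻¹ *ᵥ u) := by
  set θ := (A + vecMulVec u v)⁻¹ *ᵥ (b + y • u)
  have hθ : A *ᵥ θ = b + (y - v ⬝ᵥ θ) • u := by
    have : (A + vecMulVec u v) *ᵥ θ = b + y • u := by
      rw [mulVec_mulVec, mul_nonsing_inv _ hB, one_mulVec]
    rw [add_mulVec, vecMulVec_mulVec, op_smul_eq_smul] at this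
    rw [sub_smul, ← add_sub_assoc, ← this, add_sub_cancel_right]
  have hθ' : θ = A⁻¹ *ᵥ b + (y - v ⬝ᵥ θ) • A⁻¹ *ᵥ u := by
    rw [← mulVec_smul, ← mulVec_add, ← hθ, mulVec_mulVec, nonsing_inv_mul _ hA, one_mulVec]
  have hresidual : (y - v ⬝ᵥ θ) * (1 + v ⬝ᵥ A⁻¹ *ᵥ u) = y - v ⬝ᵥ A⁻¹ *ᵥ b := by
    have := congrArg (v ⬝ᵥ ·) hθ'
    simp only [dotProduct_add, dotProduct_smul, smul_eq_mul] at this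
    linear_combination -this
  exact eq_div_of_mul_eq (one_add_dotProduct_inv_mulVec_ne_zero hA hB) hresidual

end Matrix

/-- Test residual of the ridge solution on the training set augmented by `(x, y)`:
`y − xᵀθ₊ = (y − xᵀθ_N) / (1 + xᵀP x)` with `P = (XᵀX + λI)⁻¹`. -/
theorem ridge_residual {N M : ℕ}
    (X : Matrix (Fin N) (Fin M) ℝ) (Y : Fin N → ℝ)
    (lam : ℝ) (hlam : 0 < lam) (x : Fin M → ℝ) (y : ℝ)
    (P : Matrix (Fin M) (Fin M) ℝ)
    (hP : P = (Xᵀ * X + lam • (1 : Matrix (Fin M) (Fin M) ℝ))⁻¹)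
    (θN : Fin M → ℝ) (hθN : θN = P.mulVec (Xᵀ.mulVec Y))
    (θp : Fin M → ℝ)
    (hθp : θp = (Xᵀ * X + vecMulVec x x + lam • (1 : Matrix (Fin M) (Fin M) ℝ))⁻¹.mulVec
      (Xᵀ.mulVec Y + y • x)) :
    y - x ⬝ᵥ θp = (y - x ⬝ᵥ θN) / (1 + x ⬝ᵥ P.mulVec x) := by
  have hXX : (Xᵀ * X).PosSemidef := by simpa using posSemidef_conjTranspose_mul_self X
  have hxx : (vecMulVec x x).PosSemidef := by simpa using posSemidef_vecMulVec_self_star x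
  have hA : (Xᵀ * X + lam • 1 : Matrix (Fin M) (Fin M) ℝ).PosDef :=
    PosDef.posSemidef_add hXX (PosDef.one.smul hlam)
  have hB : (Xᵀ * X + lam • 1 + vecMulVec x x).PosDef := hA.add_posSemidef hxx
  rw [add_right_comm] at hθp
  subst hP hθN hθp
  exact sub_dotProduct_inv_add_vecMulVec_mulVec hA.det_pos.ne'.isUnit hB.det_pos.ne'.isUnit _ y
end

section
/- For every λ > 0 and every x ∈ ℝ^M, one has x⊤(XᵀX + λI)⁻¹x ≤ x⊤X⁺(X⁺)ᵀx + (1/λ)·x⊤(I − X⁺X)x; equivalently, 1 + x⊤(XᵀX + λI)⁻¹x ≤ K₀ + ‖x_⊥‖²/λ where K₀ := 1 + x⊤X⁺(X⁺)ᵀx. -/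
open Matrix

/-! With `A = XXᵀ`, `B = XXᵀ + λI` and `P = X⁺X`, the ridge inverse splits along the row space
of `X` and the kernel of `X`: `(XᵀX + λI)⁻¹ = XᵀB⁻¹(X⁺)ᵀ + λ⁻¹(I − P)`, because
`(XᵀX + λI)Xᵀ = XᵀB` and `XᵀX + λI` acts as `λ` on the kernel. Since `A⁻¹ − B⁻¹ = λA⁻¹B⁻¹`,
the gap to the claimed bound is `λX⁺B⁻¹(X⁺)ᵀ`, which is positive semidefinite. The second
inequality is the first one, as `I − P` is a symmetric idempotent and so
`‖(I − P)x‖² = xᵀ(I − P)x`. -/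

section PseudoInverse

/- `pinv` in the names below is the right pseudo-inverse `Xᵀ * (X * Xᵀ)⁻¹`. -/

variable {R m n : Type*} [CommRing R] [Fintype m] [Fintype n] [DecidableEq m]
  {X : Matrix m n R}

lemma transpose_pinv (X : Matrix m n R) : (Xᵀ * (X * Xᵀ)⁻¹)ᵀ = (X * Xᵀ)⁻¹ * X := by
  rw [transpose_mul, transpose_transpose, transpose_nonsing_inv, transpose_mul,
    transpose_transpose]

lemma mul_pinv (hX : IsUnit (X * Xᵀ).det) : X * (Xᵀ * (X * Xᵀ)⁻¹) = 1 := by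
  rw [← Matrix.mul_assoc, mul_nonsing_inv _ hX]

lemma transpose_pinv_mul (X : Matrix m n R) :
    (Xᵀ * (X * Xᵀ)⁻¹ * X)ᵀ = Xᵀ * (X * Xᵀ)⁻¹ * X := by
  rw [transpose_mul, transpose_pinv, Matrix.mul_assoc]

lemma mul_one_sub_pinv_mul [DecidableEq n] (hX : IsUnit (X * Xᵀ).det) :
    X * (1 - Xᵀ * (X * Xᵀ)⁻¹ * X) = 0 := by
  rw [Matrix.mul_sub, Matrix.mul_one, ← Matrix.mul_assoc, mul_pinv hX, Matrix.one_mul, sub_self]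

lemma transpose_one_sub_pinv_mul_mul_self [DecidableEq n] (hX : IsUnit (X * Xᵀ).det) :
    (1 - Xᵀ * (X * Xᵀ)⁻¹ * X)ᵀ * (1 - Xᵀ * (X * Xᵀ)⁻¹ * X) = 1 - Xᵀ * (X * Xᵀ)⁻¹ * X := by
  rw [transpose_sub, transpose_one, transpose_pinv_mul, Matrix.sub_mul, Matrix.one_mul,
    Matrix.mul_assoc _ X, mul_one_sub_pinv_mul hX, Matrix.mul_zero, sub_zero]

end PseudoInverse

section Ridge

variable {K m n : Type*} [Field K] [Fintype m] [Fintype n] [DecidableEq m]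
  {X : Matrix m n K} {lam : K}

lemma transpose_mul_self_add_smul_one_mul_transpose [DecidableEq n] (X : Matrix m n K)
    (lam : K) :
    (Xᵀ * X + lam • 1) * Xᵀ = Xᵀ * (X * Xᵀ + lam • 1) := by
  simp only [Matrix.add_mul, Matrix.mul_add, Matrix.mul_assoc, Matrix.smul_mul, Matrix.mul_smul,
    Matrix.one_mul, Matrix.mul_one]

lemma inv_transpose_mul_self_add_smul_one [DecidableEq n] (hX : IsUnit (X * Xᵀ).det)
    (hlam : lam ≠ 0) (hB : IsUnit (X * Xᵀ + lam • 1).det) :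
    (Xᵀ * X + lam • 1)⁻¹ =
      Xᵀ * (X * Xᵀ + lam • 1)⁻¹ * (Xᵀ * (X * Xᵀ)⁻¹)ᵀ + lam⁻¹ • (1 - Xᵀ * (X * Xᵀ)⁻¹ * X) := by
  refine inv_eq_right_inv ?_
  have hrange : (Xᵀ * X + lam • 1) * (Xᵀ * (X * Xᵀ + lam • 1)⁻¹) = Xᵀ := by
    rw [← Matrix.mul_assoc, transpose_mul_self_add_smul_one_mul_transpose, Matrix.mul_assoc,
      mul_nonsing_inv _ hB, Matrix.mul_one]
  have hkernel : (Xᵀ * X + lam • 1) * (1 - Xᵀ * (X * Xᵀ)⁻¹ * X) =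
      lam • (1 - Xᵀ * (X * Xᵀ)⁻¹ * X) := by
    rw [Matrix.add_mul, Matrix.mul_assoc, mul_one_sub_pinv_mul hX, Matrix.mul_zero, zero_add,
      Matrix.smul_mul, Matrix.one_mul]
  rw [Matrix.mul_add, ← Matrix.mul_assoc, hrange, Matrix.mul_smul, hkernel, smul_smul,
    inv_mul_cancel₀ hlam, one_smul, transpose_pinv, ← Matrix.mul_assoc, add_sub_cancel]

lemma pinv_sub_transpose_mul_inv (hX : IsUnit (X * Xᵀ).det)
    (hB : IsUnit (X * Xᵀ + lam • 1).det) :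
    Xᵀ * (X * Xᵀ)⁻¹ - Xᵀ * (X * Xᵀ + lam • 1)⁻¹ =
      lam • (Xᵀ * (X * Xᵀ)⁻¹ * (X * Xᵀ + lam • 1)⁻¹) := by
  rw [← Matrix.mul_sub, Matrix.inv_sub_inv, add_sub_cancel_left, Matrix.mul_smul,
    Matrix.smul_mul, Matrix.mul_one, Matrix.mul_smul, Matrix.mul_assoc]
  simp only [← isUnit_iff_isUnit_det] at hX hB
  exact iff_of_true hX hB

end Ridge

section Real

open scoped MatrixOrder

variable {m n : Type*} [Fintype m] [Fintype n]

lemma posDef_transpose_mul_self_add_smul_one [DecidableEq n] (X : Matrix m n ℝ) {lam : ℝ}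
    (hlam : 0 < lam) :
    (Xᵀ * X + lam • 1).PosDef := by
  simpa using PosDef.posSemidef_add (posSemidef_conjTranspose_mul_self X) (PosDef.one.smul hlam)

lemma dotProduct_mulVec_le_of_le {A B : Matrix n n ℝ} (h : A ≤ B) (x : n → ℝ) :
    x ⬝ᵥ A *ᵥ x ≤ x ⬝ᵥ B *ᵥ x := by
  have := (le_iff.mp h).dotProduct_mulVec_nonneg x
  rw [star_trivial, sub_mulVec, dotProduct_sub, sub_nonneg] at this
  exact this

lemma inv_transpose_mul_self_add_smul_one_le [DecidableEq m] [DecidableEq n] {X : Matrix m n ℝ}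
    (hX : IsUnit (X * Xᵀ).det) {lam : ℝ} (hlam : 0 < lam) :
    (Xᵀ * X + lam • 1)⁻¹ ≤
      Xᵀ * (X * Xᵀ)⁻¹ * (Xᵀ * (X * Xᵀ)⁻¹)ᵀ + lam⁻¹ • (1 - Xᵀ * (X * Xᵀ)⁻¹ * X) := by
  have hB := posDef_transpose_mul_self_add_smul_one Xᵀ hlam
  rw [transpose_transpose] at hB
  have hBunit : IsUnit (X * Xᵀ + lam • 1).det := (isUnit_iff_isUnit_det _).mp hB.isUnit
  rw [le_iff, inv_transpose_mul_self_add_smul_one hX hlam.ne' hBunit, add_sub_add_right_eq_sub,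
    ← Matrix.sub_mul, pinv_sub_transpose_mul_inv hX hBunit, Matrix.smul_mul]
  refine PosSemidef.smul ?_ hlam.le
  simpa using hB.inv.posSemidef.mul_mul_conjTranspose_same (Xᵀ * (X * Xᵀ)⁻¹)

lemma mulVec_dotProduct_mulVec_self (Q : Matrix n n ℝ) (x : n → ℝ) :
    Q *ᵥ x ⬝ᵥ Q *ᵥ x = x ⬝ᵥ (Qᵀ * Q) *ᵥ x := by
  rw [← mulVec_mulVec, dotProduct_mulVec x Qᵀ, vecMul_transpose]

end Real

/-- For every `λ > 0`, `xᵀ(XᵀX + λI)⁻¹x ≤ xᵀX⁺(X⁺)ᵀx + (1/λ)·xᵀ(I − X⁺X)x`; equivalently,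
`1 + xᵀ(XᵀX + λI)⁻¹x ≤ K₀ + ‖x_⊥‖²/λ` where `K₀ = 1 + xᵀX⁺(X⁺)ᵀx`. -/
theorem ridge_quadratic_form_upper_bound {N M : ℕ}
    (X : Matrix (Fin N) (Fin M) ℝ)
    (hX : IsUnit (X * Xᵀ).det)
    (Xplus : Matrix (Fin M) (Fin N) ℝ) (hXplus : Xplus = Xᵀ * (X * Xᵀ)⁻¹)
    (lam : ℝ) (hlam : 0 < lam) (x : Fin M → ℝ)
    (xperp : Fin M → ℝ)
    (hxperp : xperp = ((1 : Matrix (Fin M) (Fin M) ℝ) - Xplus * X).mulVec x)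
    (K0 : ℝ) (hK0 : K0 = 1 + x ⬝ᵥ (Xplus * Xplusᵀ).mulVec x) :
    x ⬝ᵥ ((Xᵀ * X + lam • (1 : Matrix (Fin M) (Fin M) ℝ))⁻¹).mulVec x ≤
        x ⬝ᵥ (Xplus * Xplusᵀ).mulVec x +
          (1 / lam) * (x ⬝ᵥ ((1 : Matrix (Fin M) (Fin M) ℝ) - Xplus * X).mulVec x) ∧
    1 + x ⬝ᵥ ((Xᵀ * X + lam • (1 : Matrix (Fin M) (Fin M) ℝ))⁻¹).mulVec x ≤
        K0 + (xperp ⬝ᵥ xperp) / lam := by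
  subst hXplus hxperp hK0
  have hbound := dotProduct_mulVec_le_of_le (inv_transpose_mul_self_add_smul_one_le hX hlam) x
  rw [add_mulVec, dotProduct_add, smul_mulVec, dotProduct_smul, smul_eq_mul, ← one_div lam]
    at hbound
  refine ⟨hbound, ?_⟩
  rw [mulVec_dotProduct_mulVec_self, transpose_one_sub_pinv_mul_mul_self hX, ← one_div_mul_eq_div]
  linarith
end

section
/- Assume x_⊥ ≠ 0 (so X₊X₊ᵀ is invertible), and set c⁺ := x_⊥/‖x_⊥‖² ∈ ℝ^M. Then the pseudo-inverse of the augmented data matrix satisfies the rank-one (Greville) update: X₊⁺ := X₊ᵀ(X₊X₊ᵀ)⁻¹ equals the M×(N+1) block matrix [X⁺ − c⁺·(x⊤X⁺) | c⁺], i.e. its first N columns are X⁺ − c⁺ x⊤X⁺ and its last column is c⁺. -/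
/-!
For a matrix `A` with `A Aᵀ` invertible, `Aᵀ (A Aᵀ)⁻¹` is the only right inverse of `A` whose
columns lie in the row space of `A`. The Greville matrix `[X⁺ − c⁺ xᵀX⁺ | c⁺]` is a right inverse
of `X₊` because `X c⁺ = 0` and `xᵀc⁺ = 1` (as `x − x_⊥ = X⁺X x` is orthogonal to `x_⊥`), and its
columns lie in the row space of `X₊` because `X⁺ = Xᵀ(XXᵀ)⁻¹` and `x_⊥ = x − Xᵀ(XXᵀ)⁻¹X x`.
-/

open Matrix

namespace Matrix

variable {R l m : Type*} {n : ℕ}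

-- `of (Fin.snoc X x)` is `X` with the row `x` appended; `of fun i => Fin.snoc (P i) (c i)` is
-- `P` with the column `c` appended.

section Semiring

variable [NonUnitalNonAssocSemiring R] [Fintype m]

theorem of_snoc_mul (X : Matrix (Fin n) m R) (x : m → R) (B : Matrix m l R) :
    of (Fin.snoc X x) * B = of (Fin.snoc (X * B) (x ᵥ* B)) := by
  ext i j
  induction i using Fin.lastCases <;> simp [mul_apply, vecMul, dotProduct, Fin.snoc]

theorem mul_of_snoc_col (A : Matrix l m R) (P : Matrix m (Fin n) R) (c : m → R) :
    A * of (fun i => Fin.snoc (P i) (c i)) = of fun i => Fin.snoc ((A * P) i) ((A *ᵥ c) i) := by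
  ext i j
  induction j using Fin.lastCases <;> simp [mul_apply, mulVec, dotProduct, Fin.snoc]

theorem vecMul_of_snoc_col (x : m → R) (P : Matrix m (Fin n) R) (c : m → R) :
    x ᵥ* of (fun i => Fin.snoc (P i) (c i)) = Fin.snoc (x ᵥ* P) (x ⬝ᵥ c) := by
  ext j
  induction j using Fin.lastCases <;> simp [vecMul, dotProduct, Fin.snoc]

end Semiring

section CommSemiring

variable [CommSemiring R]

theorem transpose_of_snoc_mulVec_snoc (X : Matrix (Fin n) m R) (x : m → R) (u : Fin n → R)
    (s : R) : (of (Fin.snoc X x))ᵀ *ᵥ Fin.snoc u s = Xᵀ *ᵥ u + s • x := by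
  ext j
  simp [mulVec, dotProduct, Fin.sum_univ_castSucc, mul_comm, Fin.snoc]

theorem transpose_of_snoc_mul_of_snoc_zero (X : Matrix (Fin n) m R) (x : m → R)
    (D : Matrix (Fin n) l R) : (of (Fin.snoc X x))ᵀ * of (Fin.snoc D 0) = Xᵀ * D := by
  ext i j
  simp [mul_apply, Fin.sum_univ_castSucc, Fin.snoc]

end CommSemiring

theorem of_snoc_one_zero_snoc_zero_one [Zero R] [One R] :
    of (Fin.snoc (of fun i => Fin.snoc ((1 : Matrix (Fin n) (Fin n) R) i) (0 : R))
      (Fin.snoc 0 1)) = (1 : Matrix (Fin (n + 1)) (Fin (n + 1)) R) := by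
  ext i j
  induction i using Fin.lastCases <;> induction j using Fin.lastCases <;>
    simp [one_apply, Fin.snoc, (Fin.castSucc_lt_last _).ne']

section CommRing

variable [CommRing R]

theorem of_snoc_col_eq_transpose_mul [Fintype l] {A : Matrix l m R} {Q : Matrix m (Fin n) R}
    {E : Matrix l (Fin n) R} {c : m → R} {w : l → R} (hQ : Q = Aᵀ * E) (hc : c = Aᵀ *ᵥ w)
    (v : Fin n → R) :
    of (fun i => Fin.snoc ((Q - vecMulVec c v) i) (c i)) =
      Aᵀ * of (fun i => Fin.snoc ((E - vecMulVec w v) i) (w i)) := by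
  rw [mul_of_snoc_col, Matrix.mul_sub, mul_vecMulVec, hQ, hc]

theorem of_snoc_mul_of_snoc_col_eq_one [Fintype m] {X : Matrix (Fin n) m R} {x : m → R}
    {Q : Matrix m (Fin n) R} {c : m → R} (hQ : X * Q = 1) (hXc : X *ᵥ c = 0)
    (hxc : x ⬝ᵥ c = 1) :
    of (Fin.snoc X x) * of (fun i => Fin.snoc ((Q - vecMulVec c (x ᵥ* Q)) i) (c i)) = 1 := by
  rw [of_snoc_mul, mul_of_snoc_col, vecMul_of_snoc_col, Matrix.mul_sub, mul_vecMulVec, hQ, hXc,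
    vecMul_sub, vecMul_vecMulVec, hxc, one_smul, sub_self, zero_vecMulVec, sub_zero]
  exact of_snoc_one_zero_snoc_zero_one

theorem transpose_mul_inv_eq_of_mul_eq_one [Fintype m] [Fintype l] [DecidableEq l]
    {A : Matrix l m R} {B : Matrix m l R} (hAB : A * B = 1) (hB : ∃ C : Matrix l l R, B = Aᵀ * C) :
    Aᵀ * (A * Aᵀ)⁻¹ = B := by
  obtain ⟨C, rfl⟩ := hB
  rw [inv_eq_right_inv (by rwa [Matrix.mul_assoc])]

end CommRing

end Matrix

/-- Greville rank-one update of the pseudo-inverse: the pseudo-inverse of the augmented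
data matrix `X₊` has first `N` columns `X⁺ − c⁺·(xᵀX⁺)` and last column `c⁺ = x_⊥/‖x_⊥‖²`. -/
theorem greville_pseudoinverse_update {N M : ℕ}
    (X : Matrix (Fin N) (Fin M) ℝ) (x : Fin M → ℝ)
    (hX : IsUnit (X * Xᵀ).det)
    (Xplus : Matrix (Fin M) (Fin N) ℝ) (hXplus : Xplus = Xᵀ * (X * Xᵀ)⁻¹)
    (xperp : Fin M → ℝ)
    (hxperp : xperp = ((1 : Matrix (Fin M) (Fin M) ℝ) - Xplus * X).mulVec x)
    (hxperp_ne : xperp ≠ 0)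
    (cplus : Fin M → ℝ) (hcplus : cplus = (xperp ⬝ᵥ xperp)⁻¹ • xperp)
    (Xp : Matrix (Fin (N + 1)) (Fin M) ℝ) (hXp : Xp = Matrix.of (Fin.snoc X x)) :
    Xpᵀ * (Xp * Xpᵀ)⁻¹ =
      Matrix.of (fun i : Fin M =>
        Fin.snoc ((Xplus - vecMulVec cplus (Matrix.vecMul x Xplus)) i) (cplus i)) := by
  have hXXplus : X * Xplus = 1 := by rw [hXplus, ← Matrix.mul_assoc, mul_nonsing_inv _ hX]
  have hXxperp : X *ᵥ xperp = 0 := by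
    rw [hxperp, mulVec_mulVec, Matrix.mul_sub, Matrix.mul_one, ← Matrix.mul_assoc, hXXplus,
      Matrix.one_mul, sub_self, zero_mulVec]
  have hxxperp : x ⬝ᵥ xperp = xperp ⬝ᵥ xperp := by
    have hx : x = xperp + Xᵀ *ᵥ ((X * Xᵀ)⁻¹ *ᵥ (X *ᵥ x)) := by
      rw [hxperp, hXplus, sub_mulVec, one_mulVec, mulVec_mulVec, mulVec_mulVec, Matrix.mul_assoc]
      abel
    conv_lhs => rw [hx]
    rw [add_dotProduct, mulVec_transpose, ← dotProduct_mulVec, hXxperp, dotProduct_zero, add_zero]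
  have hk : xperp ⬝ᵥ xperp ≠ 0 := mt dotProduct_self_eq_zero.mp hxperp_ne
  have hXc : X *ᵥ cplus = 0 := by rw [hcplus, mulVec_smul, hXxperp, smul_zero]
  have hxc : x ⬝ᵥ cplus = 1 := by
    rw [hcplus, dotProduct_smul, hxxperp, smul_eq_mul, inv_mul_cancel₀ hk]
  have hcplus_row : cplus = (of (Fin.snoc X x))ᵀ *ᵥ
      Fin.snoc (-(xperp ⬝ᵥ xperp)⁻¹ • ((X * Xᵀ)⁻¹ *ᵥ (X *ᵥ x))) (xperp ⬝ᵥ xperp)⁻¹ := by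
    rw [transpose_of_snoc_mulVec_snoc, hcplus, hxperp, hXplus, sub_mulVec, one_mulVec, mulVec_smul,
      mulVec_mulVec, mulVec_mulVec, Matrix.mul_assoc]
    module
  subst hXp
  exact transpose_mul_inv_eq_of_mul_eq_one (of_snoc_mul_of_snoc_col_eq_one hXXplus hXc hxc)
    ⟨_, of_snoc_col_eq_transpose_mul
      (hXplus.trans (transpose_of_snoc_mul_of_snoc_zero X x _).symm) hcplus_row _⟩
end
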